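/- Let n ≥ 1 be an integer and let S ⊂ ℤ² be a finite set with |S| = n² such that the subgraph of the square-lattice graph ℒ induced on S is connected. Let b be the number of ordered pairs (v,u) with v ∈ S, u ∉ S, and u adjacent to v in ℒ. Then b ≥ 4n, and moreover 2E + b = 4n², where E is the number of edges of the induced subgraph ℒ[S]. -/

import Mathlib

def latticeGraph : SimpleGraph (ℤ × ℤ) where
  Adj u v := |u.1 - v.1| + |u.2 - v.2| = 1
  symm := by
    constructor
    intro u v h
    rw [abs_sub_comm v.1, abs_sub_comm v.2]
    exact h
  loopless := by
    constructor
    intro u h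
    simp at h

/-!
Every vertex of `ℤ²` has exactly four neighbours, so counting, for each `v ∈ S`, its neighbours
inside and outside `S` gives `2E + b = 4|S|`. For the lower bound, the topmost and the bottommost
point of `S` in each column that meets `S` both start a boundary pair, and so do the leftmost and
rightmost points in each row. Hence `b ≥ 2(c + r)`, where `S` meets `c` columns and `r` rows;
since `S` lies in the product of these, `n² ≤ c r`, and `c + r ≥ 2n` by AM–GM.
-/

open Finset Function SimpleGraph

theorem exists_nsmul_mem_and_add_notMem {α : Type*} [AddCommGroup α] [IsAddTorsionFree α]
    (s : Finset α) {d : α} (hd : d ≠ 0) {v : α} (hv : v ∈ s) :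
    ∃ k : ℕ, v + k • d ∈ s ∧ v + (k + 1) • d ∉ s := by
  classical
  have hinj : Injective fun k : ℕ ↦ v + k • d := by
    intro k l hkl
    have : (k : ℤ) • d = (l : ℤ) • d := by simpa [natCast_zsmul] using hkl
    exact_mod_cast smul_left_injective ℤ hd this
  have hexit : ∃ k : ℕ, v + k • d ∉ s := by
    by_contra! h
    exact Set.infinite_range_of_injective hinj
      (s.finite_toSet.subset (Set.range_subset_iff.2 h))
  obtain ⟨k, hk⟩ : ∃ k, Nat.find hexit = k + 1 :=
    Nat.exists_eq_succ_of_ne_zero fun h ↦ Nat.find_spec hexit (by simpa [h] using hv)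
  exact ⟨k, not_not.1 (Nat.find_min hexit (by omega)), hk ▸ Nat.find_spec hexit⟩

theorem card_image_le_card_filter_add_notMem {α β : Type*} [AddCommGroup α] [IsAddTorsionFree α]
    [DecidableEq α] [DecidableEq β] (s : Finset α) {d : α} (hd : d ≠ 0) {f : α → β}
    (hf : Periodic f d) : #(s.image f) ≤ #(s.filter fun v ↦ v + d ∉ s) := by
  refine card_le_card_of_surjOn f ?_
  intro b hb
  obtain ⟨v, hv, rfl⟩ := mem_image.1 hb
  obtain ⟨k, hk, hk'⟩ := exists_nsmul_mem_and_add_notMem s hd hv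
  refine ⟨v + k • d, ?_, ?_⟩
  · simpa [add_assoc, succ_nsmul] using And.intro hk hk'
  · exact hf.nsmul k v

theorem card_le_card_image_fst_mul_card_image_snd {α β : Type*} [DecidableEq α] [DecidableEq β]
    (s : Finset (α × β)) : #s ≤ #(s.image Prod.fst) * #(s.image Prod.snd) :=
  (card_le_card subset_product).trans (card_product _ _).le

theorem Nat.two_mul_le_add_of_sq_le_mul {n a b : ℕ} (h : n ^ 2 ≤ a * b) : 2 * n ≤ a + b := by
  nlinarith [sq_nonneg ((a : ℤ) - b)]

namespace SimpleGraph

variable {V : Type*} (G : SimpleGraph V)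

def edgeBoundary (S : Set V) : Set (V × V) := {p | p.1 ∈ S ∧ p.2 ∉ S ∧ G.Adj p.1 p.2}

theorem ncard_setOf_adj_of_mem_of_mem (s : Finset V) :
    {p : V × V | p.1 ∈ s ∧ p.2 ∈ s ∧ G.Adj p.1 p.2}.ncard =
      2 * (G.induce s).edgeSet.ncard := by
  classical
  let e : {p : V × V | p.1 ∈ s ∧ p.2 ∈ s ∧ G.Adj p.1 p.2} ≃ (G.induce s).Dart :=
    { toFun p := ⟨(⟨p.1.1, p.2.1⟩, ⟨p.1.2, p.2.2.1⟩), p.2.2.2⟩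
      invFun d := ⟨(d.fst, d.snd), d.fst.2, d.snd.2, d.adj⟩
      left_inv _ := rfl
      right_inv _ := rfl }
  rw [← Nat.card_coe_set_eq, Nat.card_congr e, Nat.card_eq_fintype_card,
    dart_card_eq_twice_card_edges, Set.ncard_eq_toFinset_card']
  rfl

theorem ncard_setOf_adj_of_mem [DecidableEq V] [G.LocallyFinite] (s : Finset V) :
    {p : V × V | p.1 ∈ s ∧ G.Adj p.1 p.2}.ncard = ∑ v ∈ s, G.degree v := by
  have : {p : V × V | p.1 ∈ s ∧ G.Adj p.1 p.2} =
      ((s.sigma fun v ↦ G.neighborFinset v).map (Equiv.sigmaEquivProd V V).toEmbedding :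
        Set (V × V)) := by
    ext ⟨v, u⟩
    simp
  rw [this, Set.ncard_coe_finset, card_map, card_sigma]
  simp only [card_neighborFinset_eq_degree]

theorem two_mul_ncard_edgeSet_induce_add_ncard_edgeBoundary [DecidableEq V] [G.LocallyFinite]
    (s : Finset V) :
    2 * (G.induce s).edgeSet.ncard + (G.edgeBoundary s).ncard = ∑ v ∈ s, G.degree v := by
  have hfin : {p : V × V | p.1 ∈ s ∧ G.Adj p.1 p.2}.Finite :=
    (s.finite_toSet.prod (s.finite_toSet.biUnion fun v _ ↦ (G.neighborSet v).toFinite)).subset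
      fun p hp ↦ ⟨hp.1, Set.mem_biUnion hp.1 hp.2⟩
  rw [← ncard_setOf_adj_of_mem_of_mem, ← ncard_setOf_adj_of_mem,
    ← Set.ncard_inter_add_ncard_sdiff_eq_ncard _ {p : V × V | p.2 ∈ s} hfin]
  congr 2 <;> ext p <;>
    simp only [edgeBoundary, Set.mem_inter_iff, Set.mem_sdiff, Set.mem_ofPred_eq, mem_coe] <;> tauto

end SimpleGraph

def latticeDirs : Finset (ℤ × ℤ) := {(1, 0), (-1, 0), (0, 1), (0, -1)}

theorem latticeGraph_adj_iff {u v : ℤ × ℤ} :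
    latticeGraph.Adj u v ↔ v - u ∈ latticeDirs := by
  change |u.1 - v.1| + |u.2 - v.2| = 1 ↔ _
  simp only [latticeDirs, mem_insert, mem_singleton, Prod.ext_iff, Prod.fst_sub, Prod.snd_sub,
    Int.abs_eq_natAbs]
  omega

instance latticeGraph.instLocallyFinite : latticeGraph.LocallyFinite := fun v ↦
  Fintype.ofFinset (latticeDirs.image (v + ·)) fun u ↦ by
    simp [latticeGraph_adj_iff, neg_add_eq_sub]

theorem latticeGraph_degree (v : ℤ × ℤ) : latticeGraph.degree v = 4 := by
  rw [← card_neighborSet_eq_degree, Fintype.card_ofFinset,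
    card_image_of_injective _ (add_right_injective v)]
  rfl

theorem ncard_edgeBoundary_latticeGraph (s : Finset (ℤ × ℤ)) :
    (latticeGraph.edgeBoundary s).ncard =
      ∑ d ∈ latticeDirs, #(s.filter fun v ↦ v + d ∉ s) := by
  have : latticeGraph.edgeBoundary s =
      (((latticeDirs ×ˢ s).filter fun q ↦ q.2 + q.1 ∉ s).image fun q ↦ (q.2, q.2 + q.1) :
        Set _) := by
    ext ⟨v, u⟩
    simp only [edgeBoundary, Set.mem_ofPred_eq, mem_coe, coe_image, coe_filter, mem_product,
      Set.mem_image, latticeGraph_adj_iff]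
    constructor
    · rintro ⟨hv, hu, hd⟩
      exact ⟨(u - v, v), ⟨⟨hd, hv⟩, by simpa using hu⟩, by simp⟩
    · rintro ⟨⟨d, w⟩, ⟨⟨hd, hw⟩, hwd⟩, h⟩
      obtain ⟨rfl, rfl⟩ := Prod.mk.inj h
      exact ⟨hw, hwd, by simpa using hd⟩
  rw [this, Set.ncard_coe_finset, card_image_of_injOn, card_filter, sum_product]
  · simp only [card_filter]
  · rintro ⟨d, v⟩ - ⟨d', v'⟩ - h
    simp only [Prod.mk.injEq] at h
    obtain ⟨rfl, h⟩ := h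
    rw [add_left_cancel h]

theorem two_mul_card_image_fst_add_card_image_snd_le_ncard_edgeBoundary (s : Finset (ℤ × ℤ)) :
    2 * (#(s.image Prod.fst) + #(s.image Prod.snd)) ≤ (latticeGraph.edgeBoundary s).ncard := by
  have hfst (d : ℤ) : Periodic (Prod.fst : ℤ × ℤ → ℤ) (0, d) := fun v ↦ by simp
  have hsnd (d : ℤ) : Periodic (Prod.snd : ℤ × ℤ → ℤ) (d, 0) := fun v ↦ by simp
  have hup := card_image_le_card_filter_add_notMem s (by decide) (hfst 1)
  have hdown := card_image_le_card_filter_add_notMem s (by decide) (hfst (-1))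
  have hright := card_image_le_card_filter_add_notMem s (by decide) (hsnd 1)
  have hleft := card_image_le_card_filter_add_notMem s (by decide) (hsnd (-1))
  rw [ncard_edgeBoundary_latticeGraph, latticeDirs, sum_insert (by decide),
    sum_insert (by decide), sum_insert (by decide), sum_singleton]
  omega

theorem induced_grid_boundary_bound_general (n : ℕ) (S : Set (ℤ × ℤ))
    (hfin : S.Finite) (hcard : S.ncard = n ^ 2) :
    4 * n ≤ Set.ncard {p : (ℤ × ℤ) × (ℤ × ℤ) | p.1 ∈ S ∧ p.2 ∉ S ∧ latticeGraph.Adj p.1 p.2} ∧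
    2 * (latticeGraph.induce S).edgeSet.ncard
      + Set.ncard {p : (ℤ × ℤ) × (ℤ × ℤ) | p.1 ∈ S ∧ p.2 ∉ S ∧ latticeGraph.Adj p.1 p.2}
      = 4 * n ^ 2 := by
  lift S to Finset (ℤ × ℤ) using hfin
  rw [Set.ncard_coe_finset] at hcard
  change 4 * n ≤ (latticeGraph.edgeBoundary S).ncard ∧
    2 * (latticeGraph.induce S).edgeSet.ncard + (latticeGraph.edgeBoundary S).ncard = 4 * n ^ 2
  have hgrid : 2 * n ≤ #(S.image Prod.fst) + #(S.image Prod.snd) :=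
    Nat.two_mul_le_add_of_sq_le_mul (hcard ▸ card_le_card_image_fst_mul_card_image_snd S)
  have hlines := two_mul_card_image_fst_add_card_image_snd_le_ncard_edgeBoundary S
  have hcount := latticeGraph.two_mul_ncard_edgeSet_induce_add_ncard_edgeBoundary S
  simp only [latticeGraph_degree, sum_const, smul_eq_mul, hcard] at hcount
  exact ⟨by omega, by rw [hcount, mul_comm]⟩

theorem induced_grid_boundary_bound (n : ℕ) (hn : 1 ≤ n) (S : Set (ℤ × ℤ))
    (hfin : S.Finite) (hcard : S.ncard = n ^ 2)
    (hconn : (latticeGraph.induce S).Connected) :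
    4 * n ≤ Set.ncard {p : (ℤ × ℤ) × (ℤ × ℤ) | p.1 ∈ S ∧ p.2 ∉ S ∧ latticeGraph.Adj p.1 p.2} ∧
    2 * (latticeGraph.induce S).edgeSet.ncard
      + Set.ncard {p : (ℤ × ℤ) × (ℤ × ℤ) | p.1 ∈ S ∧ p.2 ∉ S ∧ latticeGraph.Adj p.1 p.2}
      = 4 * n ^ 2 :=
  induced_grid_boundary_bound_general n S hfin hcard
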